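/- For the family of diagrams A_{2m}^{−} containing m blocks of fragments (−1, RR_{123}) and (−1, LL_{321}) plus canceling pairs, one has ⟨S₁, A_{2m}^{−}⟩ = −2m; hence f₁(A_{2m}^{−}) = −m < 0 while f₁(A_{2m}) = m > 0, so f₁ distinguishes the two families for every m ≥ 1. -/

import Mathlib

/-- Arrow-diagram fragment type: two-arrow fragments RR, LL, RL, LR. -/
inductive Kind : Type | RR | LL | RL | LR
deriving DecidableEq

/-- A basis symbol: a fragment kind together with a permutation of the three circles. -/
structure Frag : Type where
  kind : Kind
  perm : Equiv.Perm (Fin 3)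
deriving DecidableEq

/-- The free ℤ-module on the symbols. -/
abbrev M := Frag →₀ ℤ

/-- Basis element of `M` for a given kind and permutation. -/
noncomputable def sym (k : Kind) (σ : Equiv.Perm (Fin 3)) : M := Finsupp.single ⟨k, σ⟩ 1

/-- Orthonormal bilinear pairing on `M`. -/
def pair (f g : M) : ℤ := f.sum fun b n => n * g b

/-- Reversal: (i,j,k) ↦ (k,j,i), i.e. right composition with the transposition (1 3). -/
def rev (σ : Equiv.Perm (Fin 3)) : Equiv.Perm (Fin 3) := σ * Equiv.swap 0 2

/-- Sign of a permutation as an integer. -/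
def sgn (σ : Equiv.Perm (Fin 3)) : ℤ := Equiv.Perm.sign σ

/-- The permutation (1,2,3) (identity). -/
def perm123 : Equiv.Perm (Fin 3) := 1
/-- The permutation (2,3,1). -/
def perm231 : Equiv.Perm (Fin 3) := finRotate 3
/-- The permutation (3,2,1). -/
def perm321 : Equiv.Perm (Fin 3) := Equiv.swap 0 2
/-- The permutation (1,3,2). -/
def perm132 : Equiv.Perm (Fin 3) := Equiv.swap 1 2

/-- An abstract Gauss diagram: a finite multiset of signed two-arrow fragments. -/
abbrev GaussDiagram := Multiset (ℤ × Frag)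

/-- Evaluation `⟨S, G⟩ = Σ_{(ε,b)∈G} ε·⟨S, b⟩` of a linear combination `S` on a diagram `G`. -/
noncomputable def eval (S : M) (G : GaussDiagram) : ℤ :=
  (G.map fun p => p.1 * pair S (Finsupp.single p.2 1)).sum

/-- A multiset of canceling pairs `{(+1,b),(−1,b)}`, one for each element of `P`. -/
def cancelPairs (P : Multiset Frag) : GaussDiagram :=
  P.bind fun b => {(1, b), (-1, b)}

/-! `⟨S, ·⟩` is additive on diagrams and kills every canceling pair, so only the `2m` signed
fragments `RR_{123}` and `LL_{321} = LL_{rev id}` count; `S₁` has coefficient `sgn id = 1` on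
both, hence each fragment contributes its sign. -/

lemma pair_single (f : M) (b : Frag) : pair f (Finsupp.single b 1) = f b := by
  simp [pair, Finsupp.single_apply, mul_ite, eq_comm]

lemma eval_eq_sum (S : M) (G : GaussDiagram) : eval S G = (G.map fun p => p.1 * S p.2).sum := by
  simp only [eval, pair_single]

lemma eval_add (S : M) (G H : GaussDiagram) : eval S (G + H) = eval S G + eval S H := by
  simp [eval]

lemma eval_replicate (S : M) (n : ℕ) (p : ℤ × Frag) :
    eval S (Multiset.replicate n p) = n * (p.1 * S p.2) := by
  simp [eval_eq_sum, Multiset.map_replicate, Multiset.sum_replicate]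

lemma eval_cancelPairs (S : M) (P : Multiset Frag) : eval S (cancelPairs P) = 0 := by
  simp [eval_eq_sum, cancelPairs]

lemma rev_injective : Function.Injective rev := mul_left_injective _

noncomputable def S1 : M := ∑ σ : Equiv.Perm (Fin 3), sgn σ • (sym .RR σ + sym .LL (rev σ))

lemma S1_apply_RR (σ : Equiv.Perm (Fin 3)) : S1 ⟨.RR, σ⟩ = sgn σ := by
  simp [S1, sym, Finsupp.single_apply]

lemma S1_apply_LL_rev (σ : Equiv.Perm (Fin 3)) : S1 ⟨.LL, rev σ⟩ = sgn σ := by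
  simp [S1, sym, Finsupp.single_apply, rev_injective.eq_iff]

lemma eval_S1_family (m : ℕ) (ε : ℤ) (Q : Multiset Frag) :
    eval S1 (Multiset.replicate m (ε, (⟨.RR, perm123⟩ : Frag))
      + Multiset.replicate m (ε, (⟨.LL, perm321⟩ : Frag)) + cancelPairs Q) = ε * (2 * m) := by
  have hRR : S1 ⟨.RR, perm123⟩ = 1 := by
    simp [S1_apply_RR, perm123, sgn]
  have hLL : S1 ⟨.LL, perm321⟩ = 1 := by
    simpa [sgn, rev, perm321] using S1_apply_LL_rev 1
  rw [eval_add, eval_add, eval_replicate, eval_replicate, eval_cancelPairs, hRR, hLL]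
  ring

/-- for `A_{2m}^{−}` built from `m` blocks `{(−1, RR_{123}), (−1, LL_{321})}`
plus canceling pairs, `⟨S₁, A_{2m}^{−}⟩ = −2m`; hence `f₁(A_{2m}^{−}) = −m < 0 < m = f₁(A_{2m})`
for every `m ≥ 1`, so `f₁` distinguishes the two families. -/
theorem stmt15 (m : ℕ) (Apos Aneg : GaussDiagram) (P P' : Multiset Frag)
    (hApos : Apos = Multiset.replicate m ((1 : ℤ), (⟨.RR, perm123⟩ : Frag))
        + Multiset.replicate m ((1 : ℤ), (⟨.LL, perm321⟩ : Frag)) + cancelPairs P)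
    (hAneg : Aneg = Multiset.replicate m ((-1 : ℤ), (⟨.RR, perm123⟩ : Frag))
        + Multiset.replicate m ((-1 : ℤ), (⟨.LL, perm321⟩ : Frag)) + cancelPairs P') :
    eval (∑ σ : Equiv.Perm (Fin 3), sgn σ • (sym .RR σ + sym .LL (rev σ))) Aneg = -(2 * m) ∧
    (1 ≤ m →
      eval (∑ σ : Equiv.Perm (Fin 3), sgn σ • (sym .RR σ + sym .LL (rev σ))) Aneg / 2 = -(m : ℤ) ∧
      eval (∑ σ : Equiv.Perm (Fin 3), sgn σ • (sym .RR σ + sym .LL (rev σ))) Aneg / 2 < 0 ∧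
      (0 : ℤ) < eval (∑ σ : Equiv.Perm (Fin 3), sgn σ • (sym .RR σ + sym .LL (rev σ))) Apos / 2) := by
  have hneg : eval S1 Aneg = -(2 * m) := by
    rw [hAneg, eval_S1_family]
    ring
  have hpos : eval S1 Apos = 2 * m := by
    rw [hApos, eval_S1_family]
    ring
  refine ⟨hneg, fun hm => ?_⟩
  change eval S1 Aneg / 2 = -(m : ℤ) ∧ eval S1 Aneg / 2 < 0 ∧ 0 < eval S1 Apos / 2
  rw [hneg, hpos]
  omega
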